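/- Let n = 4 and let ψ be the 4-qubit state with ψ(0,0,1,1) = ψ(0,1,0,1) = ψ(1,0,1,0) = ψ(1,1,0,0) = 1, ψ(0,1,1,0) = ψ(1,0,0,1) = −2, and ψ(I) = 0 for all other I (i.e. ψ = |0011⟩ + |0101⟩ − 2|0110⟩ − 2|1001⟩ + |1010⟩ + |1100⟩). Then dim_ℝ K_ψ = 3 and the set of all four qubits is an su(2) block for ψ. -/
import Mathlib


open scoped Matrix

noncomputable section

/-- The `n`-qubit Hilbert space `(ℂ²)^{⊗n}`, realized as functions `(Fin n → Fin 2) → ℂ`. -/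
abbrev QState (n : ℕ) := (Fin n → Fin 2) → ℂ

/-- The ambient real vector space `ℝ × (Fin n → M₂(ℂ))` containing `u(1) ⊕ su(2)^n`. -/
abbrev GV (n : ℕ) := ℝ × (Fin n → Matrix (Fin 2) (Fin 2) ℂ)

/-- `su(2)`: traceless skew-Hermitian `2 × 2` complex matrices, as a real subspace. -/
def su2 : Submodule ℝ (Matrix (Fin 2) (Fin 2) ℂ) where
  carrier := {X | Xᴴ = -X ∧ X.trace = 0}
  add_mem' := by
    rintro X Y ⟨hX1, hX2⟩ ⟨hY1, hY2⟩
    exact ⟨by rw [Matrix.conjTranspose_add, hX1, hY1, neg_add],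
           by rw [Matrix.trace_add, hX2, hY2, add_zero]⟩
  zero_mem' := ⟨by simp, by simp⟩
  smul_mem' := by
    rintro r X ⟨hX1, hX2⟩
    exact ⟨by rw [Matrix.conjTranspose_smul, hX1, star_trivial, smul_neg],
           by rw [Matrix.trace_smul, hX2, smul_zero]⟩

/-- The Lie algebra `g = u(1) ⊕ su(2)^n` as a real subspace of `GV n`. -/
def gSub (n : ℕ) : Submodule ℝ (GV n) :=
  (⊤ : Submodule ℝ ℝ).prod (Submodule.pi Set.univ fun _ => su2)

/-- `g_S`: elements `(0, X)` of `g` with `X j = 0` for `j ∉ S`. -/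
def gS {n : ℕ} (S : Set (Fin n)) : Submodule ℝ (GV n) :=
  (⊥ : Submodule ℝ ℝ).prod (Submodule.pi Set.univ fun j =>
    letI := Classical.dec (j ∈ S)
    if j ∈ S then su2 else ⊥)

/-- `ḡ_S`: elements `(t, X)` of `g` with `X j = 0` for `j ∈ S`. -/
def gBar {n : ℕ} (S : Set (Fin n)) : Submodule ℝ (GV n) :=
  (⊤ : Submodule ℝ ℝ).prod (Submodule.pi Set.univ fun j =>
    letI := Classical.dec (j ∈ S)
    if j ∈ S then (⊥ : Submodule ℝ (Matrix (Fin 2) (Fin 2) ℂ)) else su2)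

/-- The projection `P_j : g → su(2)`, `(t, X) ↦ X j`. -/
def Pj {n : ℕ} (j : Fin n) : GV n →ₗ[ℝ] Matrix (Fin 2) (Fin 2) ℂ :=
  (LinearMap.proj j).comp (LinearMap.snd ℝ ℝ (Fin n → Matrix (Fin 2) (Fin 2) ℂ))

/-- Apply the matrix `X` to qubit `j` of the state `ψ`. -/
def applySingle {n : ℕ} (j : Fin n) (X : Matrix (Fin 2) (Fin 2) ℂ) (ψ : QState n) : QState n :=
  fun I => ∑ k : Fin 2, X (I j) k * ψ (Function.update I j k)

/-- The infinitesimal local-unitary action: `dΦ_ψ(t, X) = i t ψ + Σ_j X_j ψ`. -/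
def dPhi {n : ℕ} (ψ : QState n) : GV n →ₗ[ℝ] QState n where
  toFun x := fun I => Complex.I * (x.1 : ℂ) * ψ I + ∑ j, applySingle j (x.2 j) ψ I
  map_add' x y := by
    funext I
    simp only [applySingle, Prod.fst_add, Prod.snd_add, Pi.add_apply, Matrix.add_apply,
      Complex.ofReal_add, add_mul, Finset.sum_add_distrib]
    ring
  map_smul' r x := by
    funext I
    simp only [applySingle, Prod.smul_fst, Prod.smul_snd, Pi.smul_apply, Matrix.smul_apply,
      smul_eq_mul, Complex.real_smul, Complex.ofReal_mul, RingHom.id_apply,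
      Finset.mul_sum, mul_add]
    congr 1
    · ring
    · refine Finset.sum_congr rfl fun j _ => Finset.sum_congr rfl fun k _ => by ring

/-- The stabilizer subalgebra `K_ψ = {(t,X) ∈ g : dΦ_ψ(t,X) = 0}`. -/
def stab {n : ℕ} (ψ : QState n) : Submodule ℝ (GV n) :=
  gSub n ⊓ LinearMap.ker (dPhi ψ)

/-- The componentwise bracket on `g` (zero in the `u(1)` component). -/
def gBracket {n : ℕ} (x y : GV n) : GV n :=
  (0, fun j => ⁅x.2 j, y.2 j⁆)

/-- An `su(2)` block for `ψ`: a set `S` of qubits with `dim (K_ψ ∩ g_S) > 1` and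
`dim (K_ψ ∩ g_{S'}) = 0` for every proper subset `S' ⊊ S`. -/
def Su2Block {n : ℕ} (ψ : QState n) (S : Set (Fin n)) : Prop :=
  1 < Module.finrank ℝ ↥(stab ψ ⊓ gS S) ∧
  ∀ S' : Set (Fin n), S' ⊂ S → Module.finrank ℝ ↥(stab ψ ⊓ gS S') = 0

/-- The union `B` of all `su(2)` blocks for `ψ`. -/
def blockUnion {n : ℕ} (ψ : QState n) : Set (Fin n) :=
  {q | ∃ S : Set (Fin n), Su2Block ψ S ∧ q ∈ S}

/-- The number `p` of `su(2)` blocks for `ψ`. -/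
def blockCount {n : ℕ} (ψ : QState n) : ℕ :=
  {S : Set (Fin n) | Su2Block ψ S}.ncard

/-- `ψ` factors across the set `S` of qubits: `ψ(I) = φ(I|_S) · χ(I|_{Sᶜ})`. -/
def FactorsAcross {n : ℕ} (ψ : QState n) (S : Set (Fin n)) : Prop :=
  ∃ (φ : (↥S → Fin 2) → ℂ) (χ : (↥(Sᶜ) → Fin 2) → ℂ),
    ∀ I : Fin n → Fin 2, ψ I = φ (fun j => I j.1) * χ (fun j => I j.1)

/-- `ψ` is a nonproduct state: it factors across no proper nonempty set of qubits. -/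
def IsNonproduct {n : ℕ} (ψ : QState n) : Prop :=
  ∀ S : Set (Fin n), S ≠ ∅ → S ≠ Set.univ → ¬ FactorsAcross ψ S

/-- `ψ` has a single-qubit factor. -/
def HasSingleQubitFactor {n : ℕ} (ψ : QState n) : Prop :=
  ∃ j : Fin n, FactorsAcross ψ {j}

/-- Apply the local unitary (or just local linear) transformation `⊗_j U_j` to `ψ`. -/
def luApply {n : ℕ} (U : Fin n → Matrix (Fin 2) (Fin 2) ℂ) (ψ : QState n) : QState n :=
  fun I => ∑ J : Fin n → Fin 2, (∏ j, U j (I j) (J j)) * ψ J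

/-- Local unitary equivalence of `n`-qubit states. -/
def LUEquiv {n : ℕ} (ψ ψ' : QState n) : Prop :=
  ∃ U : Fin n → Matrix (Fin 2) (Fin 2) ℂ,
    (∀ j, U j ∈ Matrix.unitaryGroup (Fin 2) ℂ) ∧ ψ' = luApply U ψ

/-- The two-qubit singlet state `φ(a,b) = δ_{a0} δ_{b1} − δ_{a1} δ_{b0}`. -/
def singletFn : Fin 2 → Fin 2 → ℂ := fun a b =>
  if a = 0 ∧ b = 1 then 1 else if a = 1 ∧ b = 0 then -1 else 0

/-- `ψ` has a singlet factor: it is LU-equivalent to a state that factors across a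
two-element set of qubits, with the two-qubit factor being the singlet. -/
def HasSingletFactor {n : ℕ} (ψ : QState n) : Prop :=
  ∃ ψ' : QState n, LUEquiv ψ ψ' ∧ ∃ j k : Fin n, j ≠ k ∧
    ∃ χ : (↥(({j, k} : Set (Fin n))ᶜ) → Fin 2) → ℂ,
      ∀ I : Fin n → Fin 2, ψ' I = singletFn (I j) (I k) * χ (fun q => I q.1)

/-- The matrix `A = diag(i, −i) ∈ su(2)`. -/
def matA : Matrix (Fin 2) (Fin 2) ℂ := !![Complex.I, 0; 0, -Complex.I]

/-- The generalized `n`-qubit GHZ state `α|0…0⟩ + β|1…1⟩`. -/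
def ghz (n : ℕ) (α β : ℂ) : QState n := fun I =>
  if ∀ j, I j = 0 then α else if ∀ j, I j = 1 then β else 0

/-- The 4-qubit state `|0011⟩ + |0101⟩ − 2|0110⟩ − 2|1001⟩ + |1010⟩ + |1100⟩`. -/
def psi4 : QState 4 := fun I =>
  if I = ![0, 0, 1, 1] then 1
  else if I = ![0, 1, 0, 1] then 1
  else if I = ![1, 0, 1, 0] then 1
  else if I = ![1, 1, 0, 0] then 1
  else if I = ![0, 1, 1, 0] then -2
  else if I = ![1, 0, 0, 1] then -2
  else 0

namespace Stmt18Aux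

def M1 : Matrix (Fin 2) (Fin 2) ℂ := !![Complex.I, 0; 0, -Complex.I]
def M2 : Matrix (Fin 2) (Fin 2) ℂ := !![0, 1; -1, 0]
def M3 : Matrix (Fin 2) (Fin 2) ℂ := !![0, Complex.I; Complex.I, 0]

def comb (c : Fin 3 → ℝ) : Matrix (Fin 2) (Fin 2) ℂ :=
  c 0 • M1 + c 1 • M2 + c 2 • M3

lemma comb_mem (c : Fin 3 → ℝ) : comb c ∈ su2 := by
  refine add_mem (add_mem (Submodule.smul_mem _ _ ?_) (Submodule.smul_mem _ _ ?_))
    (Submodule.smul_mem _ _ ?_) <;>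
  refine ⟨?_, ?_⟩ <;>
  first
  | (ext i j; fin_cases i <;> fin_cases j <;>
      simp [M1, M2, M3, Matrix.conjTranspose_apply])
  | simp [M1, M2, M3, Matrix.trace_fin_two]

lemma comb_eq_zero {c : Fin 3 → ℝ} (h : comb c = 0) : c = 0 := by
  have h00 := congr_fun (congr_fun h 0) 0
  have h01 := congr_fun (congr_fun h 0) 1
  simp [comb, M1, M2, M3, Complex.ext_iff] at h00 h01
  funext i
  fin_cases i <;> simp [h00, h01.1, h01.2]

def fmap : (Fin 3 → ℝ) →ₗ[ℝ] GV 4 where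
  toFun c := (0, fun _ => comb c)
  map_add' a b := by
    refine Prod.ext (by simp) ?_
    funext j
    simp [comb, add_smul]
    abel
  map_smul' r a := by
    refine Prod.ext (by simp) ?_
    funext j
    simp [comb, smul_smul, smul_add]


lemma dPhi_comb (c : Fin 3 → ℝ) : dPhi psi4 (fmap c) = 0 := by
  funext I
  have hI : I = ![I 0, I 1, I 2, I 3] := by funext i; fin_cases i <;> rfl
  rw [hI]
  generalize I 0 = a
  generalize I 1 = b
  generalize I 2 = d
  generalize I 3 = e
  fin_cases a <;> fin_cases b <;> fin_cases d <;> fin_cases e <;>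
  · simp only [dPhi, fmap, comb, M1, M2, M3, applySingle, LinearMap.coe_mk, AddHom.coe_mk,
      Fin.sum_univ_four, Fin.sum_univ_two, Pi.zero_apply]
    simp +decide [psi4, Function.update, Matrix.add_apply, Matrix.smul_apply,
      Matrix.cons_val_zero, Matrix.cons_val_one, Matrix.head_cons, Complex.real_smul]
    try ring

lemma fmap_mem_stab (c : Fin 3 → ℝ) : fmap c ∈ stab psi4 := by
  refine Submodule.mem_inf.mpr ⟨Submodule.mem_prod.mpr ⟨trivial, ?_⟩, ?_⟩
  · exact Submodule.mem_pi.mpr fun j _ => comb_mem c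
  · exact LinearMap.mem_ker.mpr (dPhi_comb c)

lemma stab_le_range : stab psi4 ≤ LinearMap.range fmap := by
  rintro ⟨t, X⟩ hx
  obtain ⟨hg, hk'⟩ := Submodule.mem_inf.mp hx
  have hk : dPhi psi4 (t, X) = 0 := LinearMap.mem_ker.mp hk'
  have hsu : ∀ j, X j ∈ su2 :=
    fun j => Submodule.mem_pi.mp (Submodule.mem_prod.mp hg).2 j (Set.mem_univ j)
  have T : ∀ j, X j 0 0 + X j 1 1 = 0 := by
    intro j
    have := (hsu j).2
    rwa [Matrix.trace_fin_two] at this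
  have hH := (hsu 0).1
  have S00 := congr_fun (congr_fun hH 0) 0
  have S01 := congr_fun (congr_fun hH 0) 1
  simp only [Matrix.conjTranspose_apply, Matrix.neg_apply, RCLike.star_def] at S00 S01
  have hre00 : (X 0 0 0).re = 0 := by
    have := congr_arg Complex.re S00
    simp at this
    linarith
  have hre10 : (X 0 1 0).re = -(X 0 0 1).re := by
    have := congr_arg Complex.re S01
    simpa using this
  have him10 : (X 0 1 0).im = (X 0 0 1).im := by
    have := congr_arg Complex.im S01
    simp at this
    linarith
  have E1 := congrFun hk ![0,0,1,1]
  have E2 := congrFun hk ![1,1,0,0]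
  have E3 := congrFun hk ![0,1,0,1]
  have E5 := congrFun hk ![0,1,1,0]
  have F0 := congrFun hk ![1,0,0,0]
  have F1 := congrFun hk ![0,1,0,0]
  have F2 := congrFun hk ![0,0,1,0]
  have G0 := congrFun hk ![0,1,1,1]
  have G1 := congrFun hk ![1,0,1,1]
  have G2 := congrFun hk ![1,1,0,1]
  simp only [dPhi, applySingle, LinearMap.coe_mk, AddHom.coe_mk, Fin.sum_univ_four,
    Fin.sum_univ_two, Pi.zero_apply] at E1 E2 E3 E5 F0 F1 F2 G0 G1 G2
  simp +decide [psi4, Function.update] at E1 E2 E3 E5 F0 F1 F2 G0 G1 G2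
  have ht : (t : ℂ) = 0 := by
    linear_combination (-Complex.I/2) * E1 + (-Complex.I/2) * E2 + (Complex.I/2) * (T 0)
      + (Complex.I/2) * (T 1) + (Complex.I/2) * (T 2) + (Complex.I/2) * (T 3)
      + (t : ℂ) * Complex.I_sq
  have hv1 : X 1 0 0 = X 0 0 0 := by
    linear_combination (-1/2 : ℂ) * E3 + (1/4 : ℂ) * E5 + T 1 + (1/2 : ℂ) * T 2
      + (1/2 : ℂ) * T 3 + Complex.I * ht
  have hv2 : X 2 0 0 = X 0 0 0 := by
    linear_combination (-1/2 : ℂ) * E1 + (1/4 : ℂ) * E5 + (1/2 : ℂ) * T 1 + T 2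
      + (1/2 : ℂ) * T 3 + Complex.I * ht
  have hv3 : X 3 0 0 = X 0 0 0 := by
    linear_combination (-1/2 : ℂ) * E1 + (-1/2 : ℂ) * E3 + (1/2 : ℂ) * T 1
      + (1/2 : ℂ) * T 2 + T 3 + Complex.I * ht
  have hu1 : X 1 0 1 = X 0 0 1 := by
    linear_combination (-1/2 : ℂ) * F0 + (-1/4 : ℂ) * F1 + (-3/4 : ℂ) * F2
  have hu2 : X 2 0 1 = X 0 0 1 := by
    linear_combination (-1/2 : ℂ) * F0 + (-3/4 : ℂ) * F1 + (-1/4 : ℂ) * F2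
  have hu3 : X 3 0 1 = X 0 0 1 := by
    linear_combination (-1 : ℂ) * F0 + (-1/2 : ℂ) * F1 + (-1/2 : ℂ) * F2
  have hl1 : X 1 1 0 = X 0 1 0 := by
    linear_combination (-1/2 : ℂ) * G0 + (-1/4 : ℂ) * G1 + (-3/4 : ℂ) * G2
  have hl2 : X 2 1 0 = X 0 1 0 := by
    linear_combination (-1/2 : ℂ) * G0 + (-3/4 : ℂ) * G1 + (-1/4 : ℂ) * G2
  have hl3 : X 3 1 0 = X 0 1 0 := by
    linear_combination (-1 : ℂ) * G0 + (-1/2 : ℂ) * G1 + (-1/2 : ℂ) * G2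
  refine ⟨![(X 0 0 0).im, (X 0 0 1).re, (X 0 0 1).im], ?_⟩
  have ht0 : t = 0 := by exact_mod_cast ht
  refine Prod.ext (by simp [fmap, ht0]) ?_
  have hw0 : X 0 1 1 = -X 0 0 0 := by linear_combination T 0
  have hX0 : comb ![(X 0 0 0).im, (X 0 0 1).re, (X 0 0 1).im] = X 0 := by
    ext i k
    fin_cases i <;> fin_cases k <;>
      simp [comb, M1, M2, M3, Complex.ext_iff, hre00, hre10, him10, hw0]
  have hX1 : X 1 = X 0 := by
    ext i k
    fin_cases i <;> fin_cases k
    · exact hv1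
    · exact hu1
    · exact hl1
    · show X 1 1 1 = X 0 1 1
      linear_combination T 1 - T 0 - hv1
  have hX2 : X 2 = X 0 := by
    ext i k
    fin_cases i <;> fin_cases k
    · exact hv2
    · exact hu2
    · exact hl2
    · show X 2 1 1 = X 0 1 1
      linear_combination T 2 - T 0 - hv2
  have hX3 : X 3 = X 0 := by
    ext i k
    fin_cases i <;> fin_cases k
    · exact hv3
    · exact hu3
    · exact hl3
    · show X 3 1 1 = X 0 1 1
      linear_combination T 3 - T 0 - hv3
  show (fun _ => comb _) = X
  funext j
  fin_cases j
  · exact hX0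
  · exact hX1.symm ▸ hX0
  · exact hX2.symm ▸ hX0
  · exact hX3.symm ▸ hX0

lemma range_eq_stab : LinearMap.range fmap = stab psi4 := by
  refine le_antisymm ?_ stab_le_range
  rintro x ⟨c, rfl⟩
  exact fmap_mem_stab c

lemma fmap_inj : Function.Injective fmap := by
  rw [← LinearMap.ker_eq_bot, eq_bot_iff]
  rintro c (hc : fmap c = 0)
  have h2 : comb c = 0 := congrFun (congr_arg Prod.snd hc) 0
  exact Submodule.mem_bot ℝ |>.mpr (comb_eq_zero h2)

lemma finrank_stab : Module.finrank ℝ ↥(stab psi4) = 3 := by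
  rw [← range_eq_stab, LinearMap.finrank_range_of_inj fmap_inj,
    Module.finrank_fin_fun]

lemma stab_le_gS_univ : stab psi4 ≤ gS (Set.univ : Set (Fin 4)) := by
  intro x hx
  rw [← range_eq_stab] at hx
  obtain ⟨c, rfl⟩ := hx
  refine Submodule.mem_prod.mpr ⟨Submodule.mem_bot ℝ |>.mpr rfl, ?_⟩
  refine Submodule.mem_pi.mpr fun j _ => ?_
  rw [if_pos (Set.mem_univ j)]
  exact comb_mem c

end Stmt18Aux

/-- For the 4-qubit state
`ψ = |0011⟩ + |0101⟩ − 2|0110⟩ − 2|1001⟩ + |1010⟩ + |1100⟩`, we have `dim K_ψ = 3`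
and the set of all four qubits is an `su(2)` block for `ψ`. -/


theorem stmt18 :
    Module.finrank ℝ ↥(stab psi4) = 3 ∧ Su2Block psi4 (Set.univ : Set (Fin 4)) := by
  open Stmt18Aux in
  refine ⟨finrank_stab, ?_, ?_⟩
  · rw [inf_eq_left.mpr stab_le_gS_univ, finrank_stab]
    norm_num
  · intro S' hS'
    obtain ⟨m, _, hm⟩ := Set.exists_of_ssubset hS'
    have hbot : stab psi4 ⊓ gS S' = ⊥ := by
      rw [eq_bot_iff]
      rintro x ⟨hx1, hx2⟩
      rw [← range_eq_stab] at hx1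
      obtain ⟨c, rfl⟩ := hx1
      have h2 := Submodule.mem_pi.mp (Submodule.mem_prod.mp hx2).2 m (Set.mem_univ m)
      rw [if_neg hm] at h2
      have h3 : comb c = 0 := Submodule.mem_bot ℝ |>.mp h2
      have h4 : c = 0 := comb_eq_zero h3
      rw [h4, map_zero]
      exact Submodule.zero_mem ⊥
    rw [hbot, finrank_bot]
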